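/- arXiv:1903.08853 — 3 statements merged into one kernel-verified Lean document; each statement's English description precedes it below -/
import Mathlib

section
/- Under Assumption (A1), the set K_p is convex: for any Φ_1, Φ_2 ∈ K_p and any α ∈ [0,1], the pair αΦ_1 + (1−α)Φ_2 (formed by the componentwise convex combination of the kernels) belongs to K_p, and moreover η^{αΦ_1+(1−α)Φ_2} = α η^{Φ_1} + (1−α) η^{Φ_2} as measures on X×A. -/
open MeasureTheory ProbabilityTheory Set
open scoped ENNReal ProbabilityTheory

noncomputable section

namespace MDPETR

variable {X A : Type*} [MeasurableSpace X] [MeasurableSpace A]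

/-- A (history-dependent, randomized) policy for the MDP with feasible set `K`:
at each time `n`, given the history `(x_1,a_1,…,x_n,a_n,x_{n+1})`, the policy chooses an
action distributed according to a stochastic kernel concentrated on the feasible actions
of the current state. -/
structure Policy (X A : Type*) [MeasurableSpace X] [MeasurableSpace A]
    (K : Set (X × A)) where
  kernelSeq : (n : ℕ) → Kernel ((Fin n → X × A) × X) A
  markov : ∀ n, IsMarkovKernel (kernelSeq n)
  feasible : ∀ n h, kernelSeq n h {a | (h.2, a) ∈ K} = 1

/-- The law of the history `(X_1,A_1,…,X_n,A_n,X_{n+1})` under the policy `P` with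
transition kernel `Q` and initial distribution `ν` (Ionescu–Tulcea construction). -/
def histLaw (Q : Kernel (X × A) X) (ν : Measure X) {K : Set (X × A)}
    (P : Policy X A K) : (n : ℕ) → Measure ((Fin n → X × A) × X)
  | 0 => ν.map (fun x => (fun i => i.elim0, x))
  | n + 1 =>
      (((histLaw Q ν P n) ⊗ₘ (P.kernelSeq n)) ⊗ₘ
        (Q.comap (fun q : ((Fin n → X × A) × X) × A => (q.1.2, q.2))
          (measurable_fst.snd.prodMk measurable_snd))).map
        (fun q => (Fin.snoc q.1.1.1 (q.1.1.2, q.1.2), q.2))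

/-- The law of the pair `(X_{n+1}, A_{n+1})` under the policy. -/
def pairLaw (Q : Kernel (X × A) X) (ν : Measure X) {K : Set (X × A)}
    (P : Policy X A K) (n : ℕ) : Measure (X × A) :=
  ((histLaw Q ν P n) ⊗ₘ (P.kernelSeq n)).map (fun q => (q.1.2, q.2))

/-- Occupation measure of a policy: `μ^π(Γ) = Σ_{t≥1} P_ν^π((X_t,A_t) ∈ Γ)`. -/
def occupation (Q : Kernel (X × A) X) (ν : Measure X) {K : Set (X × A)}
    (P : Policy X A K) : Measure (X × A) :=
  Measure.sum (pairLaw Q ν P)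

/-- The stationary randomized policy generated by a stochastic kernel `φ` on `A` given `X`
with `φ(A(x)|x) = 1`. -/
def stationary (K : Set (X × A)) (φ : Kernel X A) (hm : IsMarkovKernel φ)
    (hf : ∀ x, φ x {a | (x, a) ∈ K} = 1) : Policy X A K where
  kernelSeq n := φ.comap (fun h => h.2) measurable_snd
  markov n := by haveI := hm; infer_instance
  feasible n h := by rw [Kernel.comap_apply]; exact hf h.2

/-- The set `O` of occupation measures over all policies. -/
def OccR (Q : Kernel (X × A) X) (ν : Measure X) (K : Set (X × A)) :
    Set (Measure (X × A)) :=
  {μ | ∃ P : Policy X A K, μ = occupation Q ν P}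

/-- The set `O_s` of occupation measures over all stationary randomized policies. -/
def OccS (Q : Kernel (X × A) X) (ν : Measure X) (K : Set (X × A)) :
    Set (Measure (X × A)) :=
  {μ | ∃ (φ : Kernel X A) (hm : IsMarkovKernel φ) (hf : ∀ x, φ x {a | (x, a) ∈ K} = 1),
    μ = occupation Q ν (stationary K φ hm hf)}

/-- `ν P^k`. -/
def nuPk (P : Kernel X X) (ν : Measure X) : ℕ → Measure X
  | 0 => ν
  | k + 1 => (nuPk P ν k).bind (fun x => P x)

/-- The probability measure `p = Σ_{k≥0} 2^{-(k+1)} ν P^k`. -/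
def pMeas (P : Kernel X X) (ν : Measure X) : Measure X :=
  Measure.sum (fun k => (2 ^ (k + 1) : ℝ≥0∞)⁻¹ • nuPk P ν k)

/-- The measure `η^Φ(dx,da) = ∞·φ^∞(da|x) p(dx) + φ*(da|x) p(dx)`
(with the convention `0·∞ = 0`, built into `ℝ≥0∞`). -/
def etaPhi (pm : Measure X) (Φ : Kernel X A × Kernel X A) : Measure (X × A) :=
  (⊤ : ℝ≥0∞) • (pm ⊗ₘ Φ.1) + pm ⊗ₘ Φ.2

/-- The set `K_p` of feasible variables of the convex program: pairs `Φ = (φ^∞, φ*)` of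
finite kernels on `A` given `X` with `φ^∞(A|x) + φ*(A|x) > 0`,
`φ^∞(A(x)^c|x) + φ*(A(x)^c|x) = 0` and `η^Φ_X = ν + η^Φ Q`. -/
def Kp (Q : Kernel (X × A) X) (ν : Measure X) (K : Set (X × A)) (pm : Measure X) :
    Set (Kernel X A × Kernel X A) :=
  {Φ | IsFiniteKernel Φ.1 ∧ IsFiniteKernel Φ.2 ∧
    (∀ x, 0 < Φ.1 x univ + Φ.2 x univ) ∧
    (∀ x, Φ.1 x {a | (x, a) ∉ K} + Φ.2 x {a | (x, a) ∉ K} = 0) ∧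
    (etaPhi pm Φ).map Prod.fst = ν + (etaPhi pm Φ).bind (fun q => Q q)}

/-- `μ(h) = μ(h⁺) - μ(h⁻)` as an extended real number, with the convention
`(+∞) - (+∞) = -∞` (which holds for `EReal` subtraction). -/
def mInt {α : Type*} [MeasurableSpace α] (μ : Measure α) (h : α → ℝ) : EReal :=
  ((∫⁻ x, ENNReal.ofReal (h x) ∂μ : ℝ≥0∞) : EReal) -
    ((∫⁻ x, ENNReal.ofReal (-h x) ∂μ : ℝ≥0∞) : EReal)

/-- The set `E_Φ = {x : φ^∞(A|x) = 0}`. -/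
def EPhi (Φ : Kernel X A × Kernel X A) : Set X := {x | Φ.1 x univ = 0}

/-- The stationary randomized policy induced by `Φ`, as a map `X → Measure A`:
`φ_Φ(da|x) = φ^∞(da|x)/φ^∞(A|x)` if `φ^∞(A|x) ≠ 0`, and `φ*(da|x)/φ*(A|x)` otherwise. -/
def inducedMeas (Φ : Kernel X A × Kernel X A) : X → Measure A := fun x =>
  if Φ.1 x univ = 0 then (Φ.2 x univ)⁻¹ • Φ.2 x else (Φ.1 x univ)⁻¹ • Φ.1 x

end MDPETR

open MDPETR

namespace MDPETR
section Aux

variable {X A : Type*} [MeasurableSpace X] [MeasurableSpace A]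

private lemma aux_isFiniteKernel (κ κ₁ κ₂ : Kernel X A) [IsFiniteKernel κ₁]
    [IsFiniteKernel κ₂] (a b : ℝ≥0∞) (ha : a ≤ 1) (hb : b ≤ 1)
    (h : ∀ x, κ x = a • κ₁ x + b • κ₂ x) : IsFiniteKernel κ := by
  refine ⟨⟨Kernel.bound κ₁ + Kernel.bound κ₂,
    ENNReal.add_lt_top.2 ⟨Kernel.bound_lt_top _, Kernel.bound_lt_top _⟩,
    fun x => ?_⟩⟩
  rw [h x]
  simp only [Measure.add_apply, Measure.smul_apply, smul_eq_mul]
  refine add_le_add ?_ ?_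
  · exact le_trans (mul_le_mul' ha (Kernel.measure_le_bound _ _ _)) (by rw [one_mul])
  · exact le_trans (mul_le_mul' hb (Kernel.measure_le_bound _ _ _)) (by rw [one_mul])

private lemma aux_compProd (pm : Measure X) [SFinite pm] (κ κ₁ κ₂ : Kernel X A)
    [IsSFiniteKernel κ] [IsSFiniteKernel κ₁] [IsSFiniteKernel κ₂] (a b : ℝ≥0∞)
    (h : ∀ x, κ x = a • κ₁ x + b • κ₂ x) :
    pm ⊗ₘ κ = a • (pm ⊗ₘ κ₁) + b • (pm ⊗ₘ κ₂) := by
  ext s hs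
  rw [Measure.compProd_apply hs, Measure.add_apply, Measure.smul_apply, Measure.smul_apply,
    smul_eq_mul, smul_eq_mul, Measure.compProd_apply hs, Measure.compProd_apply hs,
    ← lintegral_const_mul _ (Kernel.measurable_kernel_prodMk_left hs),
    ← lintegral_const_mul _ (Kernel.measurable_kernel_prodMk_left hs),
    ← lintegral_add_left ((Kernel.measurable_kernel_prodMk_left hs).const_mul a)]
  refine lintegral_congr fun x => ?_
  rw [h x]
  simp [Measure.add_apply]

private lemma aux_bind {Y Z : Type*} [MeasurableSpace Y] [MeasurableSpace Z]
    (Q : Kernel Y Z) (μ₁ μ₂ : Measure Y) (a b : ℝ≥0∞) :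
    (a • μ₁ + b • μ₂).bind (fun q => Q q) =
      a • μ₁.bind (fun q => Q q) + b • μ₂.bind (fun q => Q q) := by
  ext s hs
  simp only [Measure.bind_apply hs Q.measurable.aemeasurable, Measure.add_apply, Measure.smul_apply,
    smul_eq_mul, lintegral_add_measure, lintegral_smul_measure]

private lemma aux_sfinite_pMeas (P : Kernel X X) [IsMarkovKernel P]
    (ν : Measure X) [IsProbabilityMeasure ν] : SFinite (pMeas P ν) := by
  have hprob : ∀ k, IsProbabilityMeasure (nuPk P ν k) := by
    intro k
    induction k with
    | zero => exact ‹IsProbabilityMeasure ν›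
    | succ k ih =>
      constructor
      rw [nuPk, Measure.bind_apply MeasurableSet.univ P.measurable.aemeasurable]
      simp [ih.measure_univ]
  have : ∀ k, IsFiniteMeasure ((2 ^ (k + 1) : ℝ≥0∞)⁻¹ • nuPk P ν k) := by
    intro k
    haveI := hprob k
    constructor
    rw [Measure.smul_apply, smul_eq_mul]
    exact ENNReal.mul_lt_top (ENNReal.inv_lt_top.2 (by positivity)) (by simp [(hprob k).measure_univ])
  haveI := this
  unfold pMeas
  exact sfinite_sum_of_countable _

end Aux

end MDPETR

/-- Under Assumption (A1), the set `K_p` is convex: the componentwise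
convex combination of two feasible variables is feasible, and `η^{αΦ₁+(1−α)Φ₂}
= α η^{Φ₁} + (1−α) η^{Φ₂}`. -/
theorem statement_2
    {X A : Type*} [MeasurableSpace X] [StandardBorelSpace X]
    [MeasurableSpace A] [StandardBorelSpace A]
    (K : Set (X × A)) (hK : MeasurableSet K) (hne : ∀ x : X, ∃ a : A, (x, a) ∈ K)
    (ϑ : X → A) (hϑm : Measurable ϑ) (hϑ : ∀ x, (x, ϑ x) ∈ K)
    (Q : Kernel (X × A) X) [IsMarkovKernel Q]
    (ν : Measure X) [IsProbabilityMeasure ν]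
    -- Assumption (A1)
    (P : Kernel X X) [IsMarkovKernel P] (hAC : ∀ q ∈ K, Q q ≪ P q.1)
    (Φ₁ Φ₂ : Kernel X A × Kernel X A)
    (hΦ₁ : Φ₁ ∈ Kp Q ν K (pMeas P ν)) (hΦ₂ : Φ₂ ∈ Kp Q ν K (pMeas P ν))
    (α : ℝ) (hα : α ∈ Set.Icc (0 : ℝ) 1)
    -- `Ψ` is the componentwise convex combination `αΦ₁ + (1−α)Φ₂`
    (Ψ : Kernel X A × Kernel X A)
    (hΨ1 : ∀ x, Ψ.1 x = ENNReal.ofReal α • Φ₁.1 x + ENNReal.ofReal (1 - α) • Φ₂.1 x)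
    (hΨ2 : ∀ x, Ψ.2 x = ENNReal.ofReal α • Φ₁.2 x + ENNReal.ofReal (1 - α) • Φ₂.2 x) :
    Ψ ∈ Kp Q ν K (pMeas P ν) ∧
      etaPhi (pMeas P ν) Ψ =
        ENNReal.ofReal α • etaPhi (pMeas P ν) Φ₁ +
          ENNReal.ofReal (1 - α) • etaPhi (pMeas P ν) Φ₂ := by
  obtain ⟨hf11, hf12, hpos1, hzero1, heq1⟩ := hΦ₁
  obtain ⟨hf21, hf22, hpos2, hzero2, heq2⟩ := hΦ₂
  set pm := pMeas P ν with hpm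
  haveI : SFinite pm := aux_sfinite_pMeas P ν
  set c := ENNReal.ofReal α with hc
  set d := ENNReal.ofReal (1 - α) with hd
  have hcd : c + d = 1 := by
    rw [hc, hd, ← ENNReal.ofReal_add hα.1 (by linarith [hα.2])]
    norm_num
  have hc1 : c ≤ 1 := by rw [← hcd]; exact le_self_add
  have hd1 : d ≤ 1 := by rw [← hcd]; exact le_add_self
  haveI hfin1 : IsFiniteKernel Ψ.1 := aux_isFiniteKernel Ψ.1 Φ₁.1 Φ₂.1 c d hc1 hd1 hΨ1
  haveI hfin2 : IsFiniteKernel Ψ.2 := aux_isFiniteKernel Ψ.2 Φ₁.2 Φ₂.2 c d hc1 hd1 hΨ2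
  have hmain : etaPhi pm Ψ = c • etaPhi pm Φ₁ + d • etaPhi pm Φ₂ := by
    unfold etaPhi
    rw [aux_compProd pm Ψ.1 Φ₁.1 Φ₂.1 c d hΨ1, aux_compProd pm Ψ.2 Φ₁.2 Φ₂.2 c d hΨ2,
      smul_add, smul_smul, smul_smul, mul_comm (⊤ : ℝ≥0∞) c, mul_comm (⊤ : ℝ≥0∞) d,
      ← smul_smul, ← smul_smul, smul_add c, smul_add d]
    abel
  refine ⟨⟨hfin1, hfin2, ?_, ?_, ?_⟩, hmain⟩
  · intro x
    rw [hΨ1 x, hΨ2 x]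
    simp only [Measure.add_apply, Measure.smul_apply, smul_eq_mul]
    rcases eq_or_ne c 0 with h0 | h0
    · have hd' : d = 1 := by rw [h0, zero_add] at hcd; exact hcd
      rw [h0, hd']
      simpa using hpos2 x
    · calc (0 : ℝ≥0∞) < c * (Φ₁.1 x univ + Φ₁.2 x univ) :=
            ENNReal.mul_pos h0 (hpos1 x).ne'
        _ = c * Φ₁.1 x univ + c * Φ₁.2 x univ := by rw [mul_add]
        _ ≤ _ := add_le_add le_self_add le_self_add
  · intro x
    obtain ⟨h11, h12⟩ := add_eq_zero.mp (hzero1 x)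
    obtain ⟨h21, h22⟩ := add_eq_zero.mp (hzero2 x)
    rw [hΨ1 x, hΨ2 x]
    simp [Measure.add_apply, h11, h12, h21, h22]
  · rw [hmain, Measure.map_add _ _ measurable_fst, Measure.map_smul, Measure.map_smul,
      heq1, heq2, aux_bind]
    have hν : c • ν + d • ν = ν := by rw [← add_smul, hcd, one_smul]
    rw [smul_add, smul_add]
    conv_rhs => rw [← hν]
    abel
end
end

section
/- Under Assumption (A1), for every policy π, the X-marginal μ^π_X of the occupation measure μ^π is absolutely continuous with respect to the probability measure p = Σ_{k≥0} 2^{-(k+1)} ν P^k. -/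
open MeasureTheory ProbabilityTheory Set
open scoped ENNReal ProbabilityTheory

noncomputable section

open MDPETR


section StatementThreeAux

variable {X A : Type*} [MeasurableSpace X] [MeasurableSpace A]

lemma measurable_snoc'' {n : ℕ} {Y : Type*} [MeasurableSpace Y] :
    Measurable (fun p : (Fin n → Y) × Y => (Fin.snoc p.1 p.2 : Fin (n+1) → Y)) := by
  refine measurable_pi_lambda _ (fun i => ?_)
  refine Fin.lastCases ?_ (fun j => ?_) i
  · simpa only [Fin.snoc_last] using measurable_snd
  · simp only [Fin.snoc_castSucc]
    exact (measurable_pi_apply j).comp measurable_fst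

lemma measurable_histSnoc {n : ℕ} :
    Measurable (fun q : (((Fin n → X × A) × X) × A) × X =>
      ((Fin.snoc q.1.1.1 (q.1.1.2, q.1.2) : Fin (n+1) → X × A), q.2)) :=
  (measurable_snoc''.comp (measurable_fst.fst.fst.prodMk
    (measurable_fst.fst.snd.prodMk measurable_fst.snd))).prodMk measurable_snd

lemma isProbabilityMeasure_histLaw (Q : Kernel (X × A) X) [IsMarkovKernel Q]
    (ν : Measure X) [IsProbabilityMeasure ν] {K : Set (X × A)} (π : Policy X A K)
    (n : ℕ) : IsProbabilityMeasure (histLaw Q ν π n) := by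
  induction n with
  | zero =>
      rw [histLaw]
      exact Measure.isProbabilityMeasure_map
        ((measurable_pi_lambda _ (fun i => i.elim0)).prodMk measurable_id).aemeasurable
  | succ n ih =>
      rw [histLaw]
      haveI := ih
      haveI := π.markov n
      exact Measure.isProbabilityMeasure_map measurable_histSnoc.aemeasurable

lemma margLaw_absCont (Q : Kernel (X × A) X) [IsMarkovKernel Q]
    (ν : Measure X) [IsProbabilityMeasure ν] {K : Set (X × A)} (hK : MeasurableSet K)
    (π : Policy X A K) (P : Kernel X X) [IsMarkovKernel P]
    (hAC : ∀ q ∈ K, Q q ≪ P q.1) (n : ℕ) :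
    (histLaw Q ν π n).map Prod.snd ≪ nuPk P ν n := by
  induction n with
  | zero =>
      have hg0 : Measurable (fun x : X => ((fun i => i.elim0 : Fin 0 → X × A), x)) :=
        measurable_const.prodMk measurable_id
      rw [histLaw, Measure.map_map measurable_snd hg0]
      have : (Prod.snd ∘ fun x : X => ((fun i => i.elim0 : Fin 0 → X × A), x)) = id := rfl
      rw [this, Measure.map_id, nuPk]
  | succ n ih =>
      refine Measure.AbsolutelyContinuous.mk (fun s hs hs0 => ?_)
      haveI := isProbabilityMeasure_histLaw Q ν π n
      haveI := π.markov n
      -- from nuPk (n+1) s = 0 get P x s = 0 for nuPk n -a.e. x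
      rw [nuPk, Measure.bind_apply hs (Kernel.measurable P).aemeasurable] at hs0
      have haeP : (fun x => P x s) =ᵐ[nuPk P ν n] 0 := by
        rwa [lintegral_eq_zero_iff (P.measurable_coe hs)] at hs0
      have hNmeas : MeasurableSet {x : X | P x s ≠ 0} :=
        ((P.measurable_coe hs) (measurableSet_singleton 0)).compl
      have hN0 : nuPk P ν n {x : X | P x s ≠ 0} = 0 := by
        have := haeP
        rw [Filter.EventuallyEq, ae_iff] at this
        exact this
      -- transfer to the history law
      have hmargN : (histLaw Q ν π n).map Prod.snd {x : X | P x s ≠ 0} = 0 := ih hN0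
      have hhistN : histLaw Q ν π n {h : (Fin n → X × A) × X | P h.2 s ≠ 0} = 0 := by
        rw [Measure.map_apply measurable_snd hNmeas] at hmargN
        exact hmargN
      set M := histLaw Q ν π n ⊗ₘ π.kernelSeq n with hM
      have h1 : M {m : ((Fin n → X × A) × X) × A | P m.1.2 s ≠ 0} = 0 := by
        have hfst : M.fst (Prod.snd ⁻¹' {x : X | P x s ≠ 0}) = 0 := by
          rw [hM, Measure.fst_compProd]; exact hhistN
        rw [Measure.fst_apply (measurable_snd hNmeas)] at hfst
        exact hfst
      have h2 : M {m : ((Fin n → X × A) × X) × A | (m.1.2, m.2) ∉ K} = 0 := by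
        have hTmeas : MeasurableSet {m : ((Fin n → X × A) × X) × A | (m.1.2, m.2) ∉ K} :=
          (((measurable_fst.snd.prodMk measurable_snd) hK)).compl
        rw [hM, Measure.compProd_apply hTmeas]
        have : ∀ h : (Fin n → X × A) × X,
            π.kernelSeq n h (Prod.mk h ⁻¹' {m : ((Fin n → X × A) × X) × A | (m.1.2, m.2) ∉ K}) = 0 := by
          intro h
          have hpre : (Prod.mk h ⁻¹' {m : ((Fin n → X × A) × X) × A | (m.1.2, m.2) ∉ K})
              = (Prod.mk h.2 ⁻¹' K)ᶜ := rfl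
          rw [hpre, prob_compl_eq_zero_iff (measurable_prodMk_left hK)]
          exact π.feasible n h
        simp only [this, lintegral_zero]
      -- a.e. vanishing of the transition probability
      have hae2 : (fun m : ((Fin n → X × A) × X) × A => Q (m.1.2, m.2) s) =ᵐ[M] 0 := by
        have hm1 : ∀ᵐ m ∂M, ¬ (P m.1.2 s ≠ 0) := by
          rw [ae_iff]; simpa only [not_not] using h1
        have hm2 : ∀ᵐ m ∂M, (m.1.2, m.2) ∈ K := by
          rw [ae_iff]; exact h2
        filter_upwards [hm1, hm2] with m h1' h2'
        exact (hAC (m.1.2, m.2) h2') (not_not.mp h1')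
      -- compute the marginal of the next history law
      rw [histLaw, Measure.map_map measurable_snd measurable_histSnoc]
      have hcomp : (Prod.snd ∘ fun q : (((Fin n → X × A) × X) × A) × X =>
          ((Fin.snoc q.1.1.1 (q.1.1.2, q.1.2) : Fin (n+1) → X × A), q.2)) = Prod.snd := rfl
      rw [hcomp, Measure.map_apply measurable_snd hs,
        Measure.compProd_apply (measurable_snd hs)]
      simp only [Kernel.comap_apply']
      show ∫⁻ m, Q (m.1.2, m.2) s ∂M = 0
      exact (lintegral_eq_zero_iff
        ((Q.measurable_coe hs).comp (measurable_fst.snd.prodMk measurable_snd))).mpr hae2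

end StatementThreeAux

/-- Under Assumption (A1), for every policy `π`, the `X`-marginal of the
occupation measure `μ^π` is absolutely continuous with respect to
`p = Σ_{k≥0} 2^{-(k+1)} ν P^k`. -/
theorem statement_3
    {X A : Type*} [MeasurableSpace X] [StandardBorelSpace X]
    [MeasurableSpace A] [StandardBorelSpace A]
    (K : Set (X × A)) (hK : MeasurableSet K) (hne : ∀ x : X, ∃ a : A, (x, a) ∈ K)
    (ϑ : X → A) (hϑm : Measurable ϑ) (hϑ : ∀ x, (x, ϑ x) ∈ K)
    (Q : Kernel (X × A) X) [IsMarkovKernel Q]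
    (ν : Measure X) [IsProbabilityMeasure ν]
    -- Assumption (A1)
    (P : Kernel X X) [IsMarkovKernel P] (hAC : ∀ q ∈ K, Q q ≪ P q.1)
    (π : Policy X A K) :
    (occupation Q ν π).map Prod.fst ≪ pMeas P ν := by
  refine Measure.AbsolutelyContinuous.mk (fun s hs hps => ?_)
  -- each `ν P^k` vanishes on `s`
  have hnuPk : ∀ k, nuPk P ν k s = 0 := by
    intro k
    rw [pMeas, Measure.sum_apply _ hs] at hps
    have := (ENNReal.tsum_eq_zero.mp hps) k
    rw [Measure.smul_apply, smul_eq_mul] at this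
    have hc : ((2 : ℝ≥0∞) ^ (k + 1))⁻¹ ≠ 0 :=
      ENNReal.inv_ne_zero.mpr (ENNReal.pow_ne_top ENNReal.ofNat_ne_top)
    exact (mul_eq_zero.mp this).resolve_left hc
  -- marginal of each pairLaw vanishes on `s`
  have hpair : ∀ n, pairLaw Q ν π n (Prod.fst ⁻¹' s) = 0 := by
    intro n
    haveI := isProbabilityMeasure_histLaw Q ν π n
    haveI := π.markov n
    rw [pairLaw, Measure.map_apply
      (measurable_fst.snd.prodMk measurable_snd) (measurable_fst hs)]
    have hset : ((fun q : ((Fin n → X × A) × X) × A => (q.1.2, q.2)) ⁻¹' (Prod.fst ⁻¹' s))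
        = Prod.fst ⁻¹' (Prod.snd ⁻¹' s) := rfl
    rw [hset, ← Measure.fst_apply (measurable_snd hs), Measure.fst_compProd,
      ← Measure.map_apply measurable_snd hs]
    exact margLaw_absCont Q ν hK π P hAC n (hnuPk n)
  rw [Measure.map_apply measurable_fst hs, occupation, Measure.sum_apply _ (measurable_fst hs)]
  simp only [hpair, tsum_zero]
end
end

section
/- Under Assumption (A1), for every Φ = (φ^∞, φ*) ∈ K_p, the X-marginal of the occupation measure of the induced stationary policy φ_Φ satisfies μ^{φ_Φ}_X ≤ η^Φ_X; consequently, writing μ^{φ_Φ}(dx,da) = D(x) φ_Φ(da|x) p(dx) for a measurable function D : X → [0,∞], one has D(x) ≤ φ*(A|x) for p-almost every x ∈ E_Φ. -/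
open MeasureTheory ProbabilityTheory Set
open scoped ENNReal ProbabilityTheory

noncomputable section

open MDPETR

namespace MDPAux

open MDPETR

variable {X A : Type*} [MeasurableSpace X] [MeasurableSpace A]

lemma measurable_snocFun {n : ℕ} {Y : Type*} [MeasurableSpace Y] :
    Measurable (fun p : (Fin n → Y) × Y => (Fin.snoc p.1 p.2 : Fin (n + 1) → Y)) := by
  refine measurable_pi_lambda _ fun i => ?_
  refine Fin.lastCases ?_ (fun j => ?_) i
  · simpa only [Fin.snoc_last] using (measurable_snd : Measurable fun p : (Fin n → Y) × Y => p.2)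
  · simpa only [Fin.snoc_castSucc, Function.comp_def] using (measurable_pi_apply j).comp
      (measurable_fst : Measurable fun p : (Fin n → Y) × Y => p.1)

lemma measurable_histStep {n : ℕ} :
    Measurable (fun q : (((Fin n → X × A) × X) × A) × X =>
      ((Fin.snoc q.1.1.1 (q.1.1.2, q.1.2) : Fin (n + 1) → X × A), q.2)) := by
  refine Measurable.prodMk ?_ measurable_snd
  exact measurable_snocFun.comp
    ((measurable_fst.comp (measurable_fst.comp measurable_fst)).prodMk
      ((measurable_snd.comp (measurable_fst.comp measurable_fst)).prodMk
        (measurable_snd.comp measurable_fst)))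

lemma histLaw_isProb (Q : Kernel (X × A) X) [IsMarkovKernel Q] (ν : Measure X)
    [IsProbabilityMeasure ν] {K : Set (X × A)} (P : Policy X A K) :
    ∀ n, IsProbabilityMeasure (histLaw Q ν P n)
  | 0 => by
      rw [histLaw]
      exact Measure.isProbabilityMeasure_map (measurable_const.prodMk measurable_id).aemeasurable
  | (n + 1) => by
      haveI := histLaw_isProb Q ν P n
      haveI := P.markov n
      rw [histLaw]
      exact Measure.isProbabilityMeasure_map measurable_histStep.aemeasurable

lemma pairLaw_isProb (Q : Kernel (X × A) X) [IsMarkovKernel Q] (ν : Measure X)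
    [IsProbabilityMeasure ν] {K : Set (X × A)} (P : Policy X A K) (n : ℕ) :
    IsProbabilityMeasure (pairLaw Q ν P n) := by
  haveI := histLaw_isProb Q ν P n
  haveI := P.markov n
  rw [pairLaw]
  exact Measure.isProbabilityMeasure_map (measurable_fst.snd.prodMk measurable_snd).aemeasurable

lemma histLaw_zero_snd (Q : Kernel (X × A) X) (ν : Measure X) {K : Set (X × A)}
    (P : Policy X A K) : (histLaw Q ν P 0).map Prod.snd = ν := by
  rw [histLaw, Measure.map_map measurable_snd
    (show Measurable fun x : X => ((fun i => i.elim0 : Fin 0 → X × A), x) from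
      measurable_const.prodMk measurable_id)]
  have h : (Prod.snd ∘ fun x : X => ((fun i => i.elim0 : Fin 0 → X × A), x)) = id := rfl
  rw [h, Measure.map_id]

lemma pairLaw_fst (Q : Kernel (X × A) X) [IsMarkovKernel Q] (ν : Measure X)
    [IsProbabilityMeasure ν] {K : Set (X × A)} (P : Policy X A K) (n : ℕ) :
    (pairLaw Q ν P n).map Prod.fst = (histLaw Q ν P n).map Prod.snd := by
  haveI := histLaw_isProb Q ν P n
  haveI := P.markov n
  rw [pairLaw, Measure.map_map measurable_fst (measurable_fst.snd.prodMk measurable_snd)]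
  have h1 : (Prod.fst ∘ fun q : ((Fin n → X × A) × X) × A => (q.1.2, q.2)) =
      (Prod.snd ∘ Prod.fst) := rfl
  rw [h1, ← Measure.map_map measurable_snd measurable_fst]
  congr 1
  exact Measure.fst_compProd _ _

lemma lawX_succ (Q : Kernel (X × A) X) [IsMarkovKernel Q] (ν : Measure X)
    [IsProbabilityMeasure ν] {K : Set (X × A)} (P : Policy X A K) (n : ℕ) :
    (histLaw Q ν P (n + 1)).map Prod.snd = (pairLaw Q ν P n).bind (fun q => Q q) := by
  haveI := histLaw_isProb Q ν P n
  haveI := P.markov n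
  rw [histLaw, Measure.map_map measurable_snd measurable_histStep]
  have h1 : (Prod.snd ∘ fun q : ((((Fin n → X × A) × X) × A) × X) =>
      ((Fin.snoc q.1.1.1 (q.1.1.2, q.1.2) : Fin (n + 1) → X × A), q.2)) = Prod.snd := rfl
  rw [h1]
  ext s hs
  rw [Measure.map_apply measurable_snd hs, Measure.compProd_apply (measurable_snd hs),
    Measure.bind_apply hs Q.measurable.aemeasurable, pairLaw,
    lintegral_map (Q.measurable_coe hs) (measurable_fst.snd.prodMk measurable_snd)]
  refine lintegral_congr fun ω => ?_
  rw [Kernel.comap_apply]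
  rfl

lemma pairLaw_stationary (Q : Kernel (X × A) X) [IsMarkovKernel Q] (ν : Measure X)
    [IsProbabilityMeasure ν] (K : Set (X × A)) (φ : Kernel X A) (hm : IsMarkovKernel φ)
    (hf : ∀ x, φ x {a | (x, a) ∈ K} = 1) (n : ℕ) :
    pairLaw Q ν (stationary K φ hm hf) n
      = ((histLaw Q ν (stationary K φ hm hf) n).map Prod.snd) ⊗ₘ φ := by
  haveI := hm
  haveI : IsMarkovKernel ((stationary K φ hm hf).kernelSeq n) := (stationary K φ hm hf).markov n
  haveI := histLaw_isProb Q ν (stationary K φ hm hf) n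
  haveI : IsProbabilityMeasure ((histLaw Q ν (stationary K φ hm hf) n).map Prod.snd) :=
    Measure.isProbabilityMeasure_map measurable_snd.aemeasurable
  ext s hs
  rw [pairLaw, Measure.map_apply (measurable_fst.snd.prodMk measurable_snd) hs,
    Measure.compProd_apply ((measurable_fst.snd.prodMk measurable_snd) hs),
    Measure.compProd_apply hs,
    lintegral_map (Kernel.measurable_kernel_prodMk_left hs) measurable_snd]
  have hks : (stationary K φ hm hf).kernelSeq n
      = φ.comap (fun h : (Fin n → X × A) × X => h.2) measurable_snd := rfl
  simp only [hks, Kernel.comap_apply]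
  exact lintegral_congr fun ω => rfl

lemma pairLaw_stationary_zero (Q : Kernel (X × A) X) [IsMarkovKernel Q] (ν : Measure X)
    [IsProbabilityMeasure ν] (K : Set (X × A)) (φ : Kernel X A) (hm : IsMarkovKernel φ)
    (hf : ∀ x, φ x {a | (x, a) ∈ K} = 1) :
    pairLaw Q ν (stationary K φ hm hf) 0 = ν ⊗ₘ φ := by
  rw [pairLaw_stationary, histLaw_zero_snd]

lemma pairLaw_stationary_succ (Q : Kernel (X × A) X) [IsMarkovKernel Q] (ν : Measure X)
    [IsProbabilityMeasure ν] (K : Set (X × A)) (φ : Kernel X A) (hm : IsMarkovKernel φ)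
    (hf : ∀ x, φ x {a | (x, a) ∈ K} = 1) (n : ℕ) :
    pairLaw Q ν (stationary K φ hm hf) (n + 1)
      = ((pairLaw Q ν (stationary K φ hm hf) n).bind (fun q => Q q)) ⊗ₘ φ := by
  rw [pairLaw_stationary, lawX_succ]

lemma bind_add_meas (μ ν' : Measure (X × A)) (Q : Kernel (X × A) X) :
    (μ + ν').bind (fun q => Q q) = μ.bind (fun q => Q q) + ν'.bind (fun q => Q q) := by
  ext s hs
  rw [Measure.bind_apply hs Q.measurable.aemeasurable, Measure.add_apply, Measure.bind_apply hs Q.measurable.aemeasurable,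
    Measure.bind_apply hs Q.measurable.aemeasurable, lintegral_add_measure]

lemma bind_mono_meas {μ μ' : Measure (X × A)} (h : μ ≤ μ') (Q : Kernel (X × A) X) :
    μ.bind (fun q => Q q) ≤ μ'.bind (fun q => Q q) := by
  refine Measure.le_iff.mpr fun s hs => ?_
  rw [Measure.bind_apply hs Q.measurable.aemeasurable, Measure.bind_apply hs Q.measurable.aemeasurable]
  exact lintegral_mono' h le_rfl

lemma isFiniteMeasure_bind (μ : Measure (X × A)) [IsFiniteMeasure μ] (Q : Kernel (X × A) X)
    [IsMarkovKernel Q] : IsFiniteMeasure (μ.bind (fun q => Q q)) := by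
  constructor
  rw [Measure.bind_apply MeasurableSet.univ Q.measurable.aemeasurable]
  simp only [measure_univ, lintegral_one]
  exact measure_lt_top μ _

lemma compProd_mono_left {μ μ' : Measure X} [SFinite μ] [SFinite μ'] (h : μ ≤ μ')
    (κ : Kernel X A) [IsSFiniteKernel κ] : μ ⊗ₘ κ ≤ μ' ⊗ₘ κ := by
  refine Measure.le_iff.mpr fun s hs => ?_
  rw [Measure.compProd_apply hs, Measure.compProd_apply hs]
  exact lintegral_mono' h le_rfl

lemma sum_range_isFinite {Y : Type*} [MeasurableSpace Y] (μ : ℕ → Measure Y)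
    (hf : ∀ i, IsFiniteMeasure (μ i)) (n : ℕ) :
    IsFiniteMeasure (∑ i ∈ Finset.range n, μ i) := by
  induction n with
  | zero => rw [Finset.sum_range_zero]; infer_instance
  | succ n ih => haveI := ih; haveI := hf n; rw [Finset.sum_range_succ]; infer_instance

lemma sum_range_bind (μ : ℕ → Measure (X × A)) (Q : Kernel (X × A) X) (n : ℕ) :
    (∑ i ∈ Finset.range n, μ i).bind (fun q => Q q)
      = ∑ i ∈ Finset.range n, (μ i).bind (fun q => Q q) := by
  induction n with
  | zero => simp only [Finset.sum_range_zero]; exact Measure.bind_zero_left _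
  | succ n ih => rw [Finset.sum_range_succ, Finset.sum_range_succ, bind_add_meas, ih]

lemma sum_range_compProd (μ : ℕ → Measure X) (hf : ∀ i, IsFiniteMeasure (μ i))
    (κ : Kernel X A) [IsSFiniteKernel κ] (n : ℕ) :
    (∑ i ∈ Finset.range n, μ i) ⊗ₘ κ = ∑ i ∈ Finset.range n, (μ i) ⊗ₘ κ := by
  induction n with
  | zero => simp only [Finset.sum_range_zero]; exact Measure.compProd_zero_left _
  | succ n ih =>
      haveI := sum_range_isFinite μ hf n
      haveI := hf n
      rw [Finset.sum_range_succ, Finset.sum_range_succ, Measure.compProd_add_left, ih]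

lemma nuPk_isProb (P : Kernel X X) [IsMarkovKernel P] (ν : Measure X)
    [IsProbabilityMeasure ν] : ∀ k, IsProbabilityMeasure (nuPk P ν k)
  | 0 => by rw [nuPk]; infer_instance
  | (k + 1) => by
      haveI := nuPk_isProb P ν k
      rw [nuPk]
      constructor
      rw [Measure.bind_apply MeasurableSet.univ P.measurable.aemeasurable]
      simp [measure_univ]

lemma pMeas_isFinite (P : Kernel X X) [IsMarkovKernel P] (ν : Measure X)
    [IsProbabilityMeasure ν] : IsFiniteMeasure (pMeas P ν) := by
  constructor
  rw [pMeas, Measure.sum_apply _ MeasurableSet.univ]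
  have h1 : ∀ k : ℕ, ((2 ^ (k + 1) : ℝ≥0∞)⁻¹ • nuPk P ν k) univ = (2 : ℝ≥0∞)⁻¹ ^ (k + 1) := by
    intro k
    haveI := nuPk_isProb P ν k
    rw [Measure.smul_apply, smul_eq_mul, measure_univ, mul_one, ← ENNReal.inv_pow]
  calc ∑' k, ((2 ^ (k + 1) : ℝ≥0∞)⁻¹ • nuPk P ν k) univ
      = ∑' k : ℕ, (2 : ℝ≥0∞)⁻¹ ^ (k + 1) := tsum_congr h1
    _ ≤ ∑' k : ℕ, (2 : ℝ≥0∞)⁻¹ ^ k := ENNReal.tsum_le_tsum fun k =>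
        pow_le_pow_of_le_one (by positivity) (ENNReal.inv_le_one.mpr one_le_two) (Nat.le_succ k)
    _ = (1 - 2⁻¹)⁻¹ := ENNReal.tsum_geometric _
    _ < ⊤ := by
        rw [ENNReal.one_sub_inv_two]
        simp

lemma etaPhi_fst (pm : Measure X) [SFinite pm] (Φ : Kernel X A × Kernel X A)
    [IsSFiniteKernel Φ.1] [IsSFiniteKernel Φ.2] :
    (etaPhi pm Φ).map Prod.fst
      = pm.withDensity (fun x => ⊤ * Φ.1 x univ + Φ.2 x univ) := by
  have hm1 : Measurable fun x => Φ.1 x univ := Φ.1.measurable_coe MeasurableSet.univ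
  have hm2 : Measurable fun x => Φ.2 x univ := Φ.2.measurable_coe MeasurableSet.univ
  ext s hs
  rw [Measure.map_apply measurable_fst hs, etaPhi, Measure.add_apply, Measure.smul_apply,
    smul_eq_mul, Measure.compProd_apply (measurable_fst hs),
    Measure.compProd_apply (measurable_fst hs), withDensity_apply _ hs]
  have key : ∀ (κ : Kernel X A) (x : X),
      κ x (Prod.mk x ⁻¹' ((Prod.fst : X × A → X) ⁻¹' s)) = s.indicator (fun x => κ x univ) x := by
    intro κ x
    by_cases hx : x ∈ s
    · have h : Prod.mk x ⁻¹' ((Prod.fst : X × A → X) ⁻¹' s) = univ := by ext a; simp [hx]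
      rw [h, Set.indicator_of_mem hx]
    · have h : Prod.mk x ⁻¹' ((Prod.fst : X × A → X) ⁻¹' s) = ∅ := by ext a; simp [hx]
      rw [h, Set.indicator_of_notMem hx]
      simp
  simp_rw [key]
  rw [lintegral_indicator hs, lintegral_indicator hs,
    lintegral_add_left (hm1.const_mul ⊤), lintegral_const_mul ⊤ hm1]

lemma compProd_le_etaPhi (pm : Measure X) [SFinite pm] (Φ : Kernel X A × Kernel X A)
    [IsFiniteKernel Φ.1] [IsFiniteKernel Φ.2] (φ : Kernel X A) [IsMarkovKernel φ]
    (hind : ∀ x, φ x = inducedMeas Φ x) :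
    (pm.withDensity (fun x => ⊤ * Φ.1 x univ + Φ.2 x univ)) ⊗ₘ φ ≤ etaPhi pm Φ := by
  have hm1 : Measurable fun x => Φ.1 x univ := Φ.1.measurable_coe MeasurableSet.univ
  have hm2 : Measurable fun x => Φ.2 x univ := Φ.2.measurable_coe MeasurableSet.univ
  have hg : Measurable fun x => ⊤ * Φ.1 x univ + Φ.2 x univ := (hm1.const_mul ⊤).add hm2
  refine Measure.le_iff.mpr fun s hs => ?_
  rw [Measure.compProd_apply hs,
    lintegral_withDensity_eq_lintegral_mul pm hg (Kernel.measurable_kernel_prodMk_left hs),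
    etaPhi, Measure.add_apply, Measure.smul_apply, smul_eq_mul,
    Measure.compProd_apply hs, Measure.compProd_apply hs,
    ← lintegral_const_mul ⊤ (Kernel.measurable_kernel_prodMk_left hs),
    ← lintegral_add_left ((Kernel.measurable_kernel_prodMk_left hs).const_mul ⊤)]
  refine lintegral_mono fun x => ?_
  simp only [Pi.mul_apply]
  rw [hind x]
  simp only [inducedMeas]
  by_cases h0 : Φ.1 x univ = 0
  · rw [if_pos h0]
    have h1s : Φ.1 x (Prod.mk x ⁻¹' s) = 0 := measure_mono_null (subset_univ _) h0
    rw [h0, h1s]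
    simp only [mul_zero, zero_add, Measure.smul_apply, smul_eq_mul]
    rw [← mul_assoc]
    calc (Φ.2 x univ * (Φ.2 x univ)⁻¹) * Φ.2 x (Prod.mk x ⁻¹' s)
        ≤ 1 * Φ.2 x (Prod.mk x ⁻¹' s) := mul_le_mul_left (ENNReal.mul_inv_le_one _) _
      _ = Φ.2 x (Prod.mk x ⁻¹' s) := one_mul _
  · rw [if_neg h0]
    by_cases hsec : Φ.1 x (Prod.mk x ⁻¹' s) = 0
    · simp only [Measure.smul_apply, smul_eq_mul, hsec, mul_zero]
      exact zero_le
    · rw [ENNReal.top_mul hsec, top_add]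
      exact le_top

end MDPAux


/-- Under Assumption (A1), for every `Φ = (φ^∞,φ*) ∈ K_p`, the
`X`-marginal of the occupation measure of the induced stationary policy `φ_Φ` satisfies
`μ^{φ_Φ}_X ≤ η^Φ_X`; consequently, writing `μ^{φ_Φ}(dx,da) = D(x) φ_Φ(da|x) p(dx)`, one
has `D(x) ≤ φ*(A|x)` for `p`-almost every `x ∈ E_Φ`. -/
theorem statement_6
    {X A : Type*} [MeasurableSpace X] [StandardBorelSpace X]
    [MeasurableSpace A] [StandardBorelSpace A]
    (K : Set (X × A)) (hK : MeasurableSet K) (hne : ∀ x : X, ∃ a : A, (x, a) ∈ K)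
    (ϑ : X → A) (hϑm : Measurable ϑ) (hϑ : ∀ x, (x, ϑ x) ∈ K)
    (Q : Kernel (X × A) X) [IsMarkovKernel Q]
    (ν : Measure X) [IsProbabilityMeasure ν]
    -- Assumption (A1)
    (P : Kernel X X) [IsMarkovKernel P] (hAC : ∀ q ∈ K, Q q ≪ P q.1)
    (Φ : Kernel X A × Kernel X A) (hΦ : Φ ∈ Kp Q ν K (pMeas P ν))
    -- `φ` is the stationary randomized policy induced by `Φ`
    (φ : Kernel X A) (hm : IsMarkovKernel φ) (hf : ∀ x, φ x {a | (x, a) ∈ K} = 1)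
    (hind : ∀ x, φ x = inducedMeas Φ x) :
    (occupation Q ν (stationary K φ hm hf)).map Prod.fst ≤
        (etaPhi (pMeas P ν) Φ).map Prod.fst ∧
      ∀ D : X → ℝ≥0∞, Measurable D →
        occupation Q ν (stationary K φ hm hf) = ((pMeas P ν).withDensity D) ⊗ₘ φ →
        ∀ᵐ x ∂(pMeas P ν), x ∈ EPhi Φ → D x ≤ Φ.2 x Set.univ := by
  classical
  obtain ⟨hfin1, hfin2, hpos, hfeas, heq⟩ := hΦ
  haveI := hfin1; haveI := hfin2; haveI := hm
  haveI := MDPAux.pMeas_isFinite P ν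
  set pm := pMeas P ν with hpm
  set η := etaPhi pm Φ with hη
  set g : X → ℝ≥0∞ := fun x => ⊤ * Φ.1 x univ + Φ.2 x univ with hgdef
  have hm1 : Measurable fun x => Φ.1 x univ := Φ.1.measurable_coe MeasurableSet.univ
  have hm2 : Measurable fun x => Φ.2 x univ := Φ.2.measurable_coe MeasurableSet.univ
  have hgm : Measurable g := (hm1.const_mul ⊤).add hm2
  have hfst : η.map Prod.fst = pm.withDensity g := MDPAux.etaPhi_fst pm Φ
  set SP := stationary K φ hm hf with hSP
  have hkey : (pm.withDensity g) ⊗ₘ φ ≤ η := MDPAux.compProd_le_etaPhi pm Φ φ hind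
  haveI : ∀ i, IsFiniteMeasure (pairLaw Q ν SP i) := fun i => by
    haveI := MDPAux.pairLaw_isProb Q ν SP i
    infer_instance
  have hsum : ∀ n, (∑ i ∈ Finset.range n, pairLaw Q ν SP i) ≤ η := by
    intro n
    induction n with
    | zero => rw [Finset.sum_range_zero]; exact Measure.zero_le _
    | succ n ih =>
        haveI := MDPAux.sum_range_isFinite (fun i => pairLaw Q ν SP i) (fun i => inferInstance) n
        haveI := MDPAux.isFiniteMeasure_bind (∑ i ∈ Finset.range n, pairLaw Q ν SP i) Q
        have hrec : ∑ i ∈ Finset.range (n + 1), pairLaw Q ν SP i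
            = (ν + (∑ i ∈ Finset.range n, pairLaw Q ν SP i).bind (fun q => Q q)) ⊗ₘ φ := by
          rw [Finset.sum_range_succ']
          have h0 : pairLaw Q ν SP 0 = ν ⊗ₘ φ := MDPAux.pairLaw_stationary_zero Q ν K φ hm hf
          have hstep : ∀ i, pairLaw Q ν SP (i + 1)
              = ((pairLaw Q ν SP i).bind (fun q => Q q)) ⊗ₘ φ := fun i =>
            MDPAux.pairLaw_stationary_succ Q ν K φ hm hf i
          rw [h0]
          simp only [hstep]
          rw [← MDPAux.sum_range_compProd _
              (fun i => MDPAux.isFiniteMeasure_bind (pairLaw Q ν SP i) Q) φ n,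
            ← MDPAux.sum_range_bind, ← Measure.compProd_add_left]
          exact congrArg (· ⊗ₘ φ) (add_comm _ _)
        rw [hrec]
        have h2 : ν + (∑ i ∈ Finset.range n, pairLaw Q ν SP i).bind (fun q => Q q)
            ≤ pm.withDensity g := by
          have h1 := MDPAux.bind_mono_meas ih Q
          have h3 : ν + η.bind (fun q => Q q) = pm.withDensity g := by
            rw [← heq]; exact hfst
          calc ν + (∑ i ∈ Finset.range n, pairLaw Q ν SP i).bind (fun q => Q q)
              ≤ ν + η.bind (fun q => Q q) := add_le_add_right h1 ν
            _ = pm.withDensity g := h3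
        exact (MDPAux.compProd_mono_left h2 φ).trans hkey
  have hocc : occupation Q ν SP ≤ η := by
    refine Measure.le_iff.mpr fun s hs => ?_
    rw [occupation, Measure.sum_apply _ hs]
    refine Summable.tsum_le_of_sum_le ENNReal.summable fun I => ?_
    obtain ⟨n, hn⟩ := I.exists_nat_subset_range
    calc ∑ i ∈ I, pairLaw Q ν SP i s
        ≤ ∑ i ∈ Finset.range n, pairLaw Q ν SP i s := Finset.sum_le_sum_of_subset hn
      _ = (∑ i ∈ Finset.range n, pairLaw Q ν SP i) s :=
          (Measure.finset_sum_apply _ _ _).symm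
      _ ≤ η s := Measure.le_iff'.mp (hsum n) s
  refine ⟨Measure.map_mono hocc measurable_fst, ?_⟩
  intro D hD hDe
  have hmapocc := Measure.map_mono hocc measurable_fst
  rw [hDe] at hmapocc
  have hfstD : ((pm.withDensity D) ⊗ₘ φ).map Prod.fst = pm.withDensity D :=
    Measure.fst_compProd _ _
  rw [hfstD, hfst] at hmapocc
  set S : Set X := {x | Φ.1 x univ = 0 ∧ Φ.2 x univ < D x} with hSdef
  have hSm : MeasurableSet S := by
    have h1 : MeasurableSet {x | Φ.1 x univ = 0} := hm1 (measurableSet_singleton 0)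
    have h2 : MeasurableSet {x | Φ.2 x univ < D x} := measurableSet_lt hm2 hD
    exact h1.inter h2
  have hgS : ∀ x ∈ S, g x = Φ.2 x univ := by
    intro x hx
    simp only [hgdef]
    rw [hx.1, mul_zero, zero_add]
  have hglt : ∫⁻ x in S, g x ∂pm < ⊤ := by
    have hb : ∫⁻ x in S, g x ∂pm ≤ ∫⁻ _ in S, Kernel.bound Φ.2 ∂pm := by
      refine setLIntegral_mono measurable_const fun x hx => ?_
      rw [hgS x hx]
      exact Kernel.measure_le_bound Φ.2 x univ
    refine hb.trans_lt ?_
    rw [setLIntegral_const]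
    exact ENNReal.mul_lt_top (Kernel.bound_lt_top Φ.2) (measure_lt_top _ _)
  have hDS : ∫⁻ x in S, D x ∂pm ≤ ∫⁻ x in S, g x ∂pm := by
    have h := Measure.le_iff'.mp hmapocc S
    rwa [withDensity_apply _ hSm, withDensity_apply _ hSm] at h
  have hgD : ∀ x ∈ S, g x ≤ D x := by
    intro x hx
    rw [hgS x hx]
    exact hx.2.le
  have hSD : ∫⁻ x in S, g x ∂pm ≤ ∫⁻ x in S, D x ∂pm := setLIntegral_mono hD hgD
  have hEq : ∫⁻ x in S, D x ∂pm = ∫⁻ x in S, g x ∂pm := le_antisymm hDS hSD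
  have hae0 : ∀ᵐ x ∂(pm.restrict S), D x - g x = 0 := by
    have hsub : ∫⁻ x in S, (D x - g x) ∂pm = 0 := by
      rw [lintegral_sub hgm hglt.ne ((ae_restrict_mem hSm).mono fun x hx => hgD x hx), hEq,
        tsub_self]
    have h4 := (lintegral_eq_zero_iff (hD.sub hgm)).mp hsub
    filter_upwards [h4] with x hx
    simpa using hx
  have hS0 : pm S = 0 := by
    rw [← Measure.restrict_eq_zero, ← Measure.measure_univ_eq_zero]
    have hfalse : ∀ᵐ x ∂(pm.restrict S), False := by
      filter_upwards [hae0, ae_restrict_mem hSm] with x hx hxS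
      have h1 : D x ≤ g x := tsub_eq_zero_iff_le.mp hx
      have h2 : g x < D x := by rw [hgS x hxS]; exact hxS.2
      exact absurd h1 (not_le.mpr h2)
    have h3 := ae_iff.mp hfalse
    simpa using h3
  have hnm : ∀ᵐ x ∂pm, x ∉ S := measure_eq_zero_iff_ae_notMem.mp hS0
  filter_upwards [hnm] with x hx hxE
  by_contra hlt
  exact hx ⟨hxE, not_le.mp hlt⟩
end
end
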